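/- Disjoint normal form for first-order definable relations on bijective structures: for every first-order σ-formula φ(x_1,…,x_p) there exist finitely many formulas Ψ_1(x̄),…,Ψ_r(x̄), each a conjunction of bijective literals, such that for every bijective σ-structure S with domain D: φ(S) = Ψ_1(S) ∪ ⋯ ∪ Ψ_r(S), and Ψ_i(S) ∩ Ψ_j(S) = ∅ for all 1 ≤ i < j ≤ r, where φ(S) = {ā ∈ D^p : S ⊨ φ(ā)}. -/

import Mathlib

/-!
Deep embedding of bijective first-order logic (paper: Durand–Grandjean).
A unary functional signature σ has constant symbols indexed by `C`, monadic
predicate symbols indexed by `U`, and unary function symbols indexed by `F`.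
A bijective σ-structure over domain `D` interprets constants by `cI : C → D`,
monadic predicates by `uI : U → D → Prop`, and every unary function symbol by a
permutation of `D`, `fI : F → Equiv.Perm D`.
-/

namespace PaperQE

/-- A bijective term `f_{i₁}^{ε₁} ∘ ⋯ ∘ f_{iₗ}^{εₗ}(·)` encoded as the list of
its signed function symbols (`true` = the symbol, `false` = its inverse). -/
abbrev Word (F : Type) := List (F × Bool)

/-- Evaluation of a bijective term at an element of the domain. -/
def evalWord {F : Type} {D : Type*} (fI : F → Equiv.Perm D) : Word F → D → D
  | [], x => x
  | (f, b) :: w, x => (if b then fI f else (fI f).symm) (evalWord fI w x)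

/-- Bijective atomic formulas other than cardinality statements, with free
variables among `Fin n`: `τ(xᵢ) = τ'(xⱼ)`, `τ(xᵢ) = c`, `U(τ(xᵢ))`. -/
inductive NCAtom (C U F : Type) (n : ℕ) : Type
  | eq : Word F → Fin n → Word F → Fin n → NCAtom C U F n
  | eqc : Word F → Fin n → C → NCAtom C U F n
  | pred : U → Word F → Fin n → NCAtom C U F n

/-- Satisfaction of non-cardinality bijective atoms. -/
def NCAtom.Sat {C U F : Type} {D : Type*} (cI : C → D) (uI : U → D → Prop)
    (fI : F → Equiv.Perm D) : ∀ {n : ℕ}, NCAtom C U F n → (Fin n → D) → Prop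
  | _, .eq w₁ i w₂ j, v => evalWord fI w₁ (v i) = evalWord fI w₂ (v j)
  | _, .eqc w i c, v => evalWord fI w (v i) = cI c
  | _, .pred u w i, v => uI u (evalWord fI w (v i))

/-- Boolean combinations over a type `α` of atoms. -/
inductive BC (α : Type) : Type
  | tru : BC α
  | atom : α → BC α
  | not : BC α → BC α
  | and : BC α → BC α → BC α
  | or : BC α → BC α → BC α

/-- Satisfaction of a Boolean combination, given satisfaction of atoms. -/
def BC.Sat {α : Type} (s : α → Prop) : BC α → Prop
  | .tru => True
  | .atom a => s a
  | .not φ => ¬ BC.Sat s φ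
  | .and φ ψ => BC.Sat s φ ∧ BC.Sat s ψ
  | .or φ ψ => BC.Sat s φ ∨ BC.Sat s ψ

/-- Bijective atomic formulas: non-cardinality atoms together with cardinality
statements `∃^{≥k} x Ψ(x)`, where `Ψ` is a Boolean combination of bijective
atoms in the single variable `x`. -/
inductive BAtom (C U F : Type) (n : ℕ) : Type
  | nc : NCAtom C U F n → BAtom C U F n
  | card : ℕ → BC (NCAtom C U F 1) → BAtom C U F n

/-- Satisfaction of bijective atomic formulas. A cardinality statement
`∃^{≥k} x Ψ(x)` holds when there are at least `k` values of `x` satisfying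
`Ψ`, i.e. there is an injection of `Fin k` into the set defined by `Ψ`. -/
def BAtom.Sat {C U F : Type} {D : Type*} (cI : C → D) (uI : U → D → Prop)
    (fI : F → Equiv.Perm D) : ∀ {n : ℕ}, BAtom C U F n → (Fin n → D) → Prop
  | _, .nc a, v => a.Sat cI uI fI v
  | _, .card k Ψ, _ =>
      ∃ e : Fin k ↪ D, ∀ i : Fin k, Ψ.Sat (fun a => a.Sat cI uI fI (fun _ => e i))

/-- First-order formulas built from bijective atomic formulas (the class
`FO_Bij`), with free variables among `Fin n`. -/
inductive BForm (C U F : Type) : ℕ → Type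
  | atom : ∀ {n}, BAtom C U F n → BForm C U F n
  | not : ∀ {n}, BForm C U F n → BForm C U F n
  | and : ∀ {n}, BForm C U F n → BForm C U F n → BForm C U F n
  | or : ∀ {n}, BForm C U F n → BForm C U F n → BForm C U F n
  | ex : ∀ {n}, BForm C U F (n + 1) → BForm C U F n
  | all : ∀ {n}, BForm C U F (n + 1) → BForm C U F n

/-- Tarskian satisfaction of bijective first-order formulas in a bijective
σ-structure `(D, cI, uI, fI)` under an assignment `v` of the free variables. -/
def BForm.Sat {C U F : Type} {D : Type*} (cI : C → D) (uI : U → D → Prop)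
    (fI : F → Equiv.Perm D) : ∀ {n : ℕ}, BForm C U F n → (Fin n → D) → Prop
  | _, .atom a, v => a.Sat cI uI fI v
  | _, .not φ, v => ¬ BForm.Sat cI uI fI φ v
  | _, .and φ ψ, v => BForm.Sat cI uI fI φ v ∧ BForm.Sat cI uI fI ψ v
  | _, .or φ ψ, v => BForm.Sat cI uI fI φ v ∨ BForm.Sat cI uI fI ψ v
  | _, .ex φ, v => ∃ y : D, BForm.Sat cI uI fI φ (Fin.snoc v y)
  | _, .all φ, v => ∀ y : D, BForm.Sat cI uI fI φ (Fin.snoc v y)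

end PaperQE

namespace PaperQE

/-- A bijective literal is a bijective atomic formula (`true`) or its negation
(`false`); a conjunction of bijective literals is a list of signed atoms.
`ConjSet` is the set of tuples of the domain satisfying such a conjunction. -/
def ConjSet {C U F : Type} {D : Type*} (cI : C → D) (uI : U → D → Prop)
    (fI : F → Equiv.Perm D) {n : ℕ} (Ψ : List (BAtom C U F n × Bool)) :
    Set (Fin n → D) :=
  {v | ∀ l ∈ Ψ, if l.2 then l.1.Sat cI uI fI v else ¬ l.1.Sat cI uI fI v}

end PaperQE
namespace PaperQE

variable {C U F : Type} {D : Type*}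

/-! ### Words -/

def winv (w : Word F) : Word F := (w.reverse).map (fun p => (p.1, !p.2))

@[simp] lemma winv_winv (w : Word F) : winv (winv w) = w := by
  simp only [winv, List.map_reverse, List.reverse_reverse, List.map_map]
  have : ((fun p : F × Bool => (p.1, !p.2)) ∘ fun p : F × Bool => (p.1, !p.2)) = id := by
    funext p; simp
  simp [this]

lemma evalWord_append (fI : F → Equiv.Perm D) (w₁ w₂ : Word F) (x : D) :
    evalWord fI (w₁ ++ w₂) x = evalWord fI w₁ (evalWord fI w₂ x) := by
  induction w₁ with
  | nil => simp [evalWord]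
  | cons h t ih => obtain ⟨f, b⟩ := h; simp [evalWord, ih]

@[simp] lemma evalWord_winv (fI : F → Equiv.Perm D) (w : Word F) (x : D) :
    evalWord fI (winv w) (evalWord fI w x) = x := by
  induction w generalizing x with
  | nil => simp [evalWord, winv]
  | cons h t ih =>
    obtain ⟨f, b⟩ := h
    have : winv ((f, b) :: t) = winv t ++ [(f, !b)] := by simp [winv]
    rw [this, evalWord_append]
    cases b <;> simp [evalWord, ih]

@[simp] lemma evalWord_winv' (fI : F → Equiv.Perm D) (w : Word F) (x : D) :
    evalWord fI w (evalWord fI (winv w) x) = x := by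
  have h := evalWord_winv fI (winv w) x
  rwa [winv_winv] at h

lemma evalWord_eq_iff (fI : F → Equiv.Perm D) (w : Word F) (x y : D) :
    evalWord fI w x = y ↔ x = evalWord fI (winv w) y := by
  constructor
  · rintro rfl; rw [evalWord_winv]
  · rintro rfl; rw [evalWord_winv']

end PaperQE
namespace PaperQE

variable {C U F : Type} {D : Type*} {α β : Type}

/-! ### BC utilities -/

def BC.conjList : List (BC α) → BC α
  | [] => .tru
  | φ :: l => .and φ (BC.conjList l)

def BC.disjList : List (BC α) → BC α
  | [] => .not .tru
  | φ :: l => .or φ (BC.disjList l)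

@[simp] lemma BC.sat_conjList (s : α → Prop) (L : List (BC α)) :
    (BC.conjList L).Sat s ↔ ∀ φ ∈ L, φ.Sat s := by
  induction L with
  | nil => simp [BC.conjList, BC.Sat]
  | cons h t ih => simp [BC.conjList, BC.Sat, ih]

@[simp] lemma BC.sat_disjList (s : α → Prop) (L : List (BC α)) :
    (BC.disjList L).Sat s ↔ ∃ φ ∈ L, φ.Sat s := by
  induction L with
  | nil => simp [BC.disjList, BC.Sat]
  | cons h t ih => simp [BC.disjList, BC.Sat, ih]

def BC.map (f : α → β) : BC α → BC β
  | .tru => .tru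
  | .atom a => .atom (f a)
  | .not φ => .not (BC.map f φ)
  | .and φ ψ => .and (BC.map f φ) (BC.map f ψ)
  | .or φ ψ => .or (BC.map f φ) (BC.map f ψ)

@[simp] lemma BC.sat_map (f : α → β) (s : β → Prop) (φ : BC α) :
    (BC.map f φ).Sat s ↔ φ.Sat (fun a => s (f a)) := by
  induction φ <;> simp [BC.map, BC.Sat, *]

/-- A literal as a Boolean combination. -/
def BC.lit (a : α) (b : Bool) : BC α := if b then .atom a else .not (.atom a)

@[simp] lemma BC.sat_lit (s : α → Prop) (a : α) (b : Bool) :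
    (BC.lit a b).Sat s ↔ (if b then s a else ¬ s a) := by
  cases b <;> simp [BC.lit, BC.Sat]

/-- Satisfaction of a `BC` only depends on the values of `s` on the atoms
occurring in it. -/
def BC.atoms : BC α → List α
  | .tru => []
  | .atom a => [a]
  | .not φ => φ.atoms
  | .and φ ψ => φ.atoms ++ ψ.atoms
  | .or φ ψ => φ.atoms ++ ψ.atoms

lemma BC.sat_congr {s s' : α → Prop} (φ : BC α)
    (h : ∀ a ∈ φ.atoms, (s a ↔ s' a)) : φ.Sat s ↔ φ.Sat s' := by
  induction φ with
  | tru => simp [BC.Sat]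
  | atom a => simpa [BC.Sat, BC.atoms] using h a (by simp [BC.atoms])
  | not φ ih => simp only [BC.Sat]; rw [ih h]
  | and φ ψ ih₁ ih₂ =>
    simp only [BC.Sat]
    rw [ih₁ (fun a ha => h a (by simp [BC.atoms, ha])),
        ih₂ (fun a ha => h a (by simp [BC.atoms, ha]))]
  | or φ ψ ih₁ ih₂ =>
    simp only [BC.Sat]
    rw [ih₁ (fun a ha => h a (by simp [BC.atoms, ha])),
        ih₂ (fun a ha => h a (by simp [BC.atoms, ha]))]

/-- Satisfaction of a conjunction of signed atoms. -/
def LitsSat (s : α → Prop) (K : List (α × Bool)) : Prop :=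
  ∀ l ∈ K, if l.2 then s l.1 else ¬ s l.1

@[simp] lemma litsSat_nil (s : α → Prop) : LitsSat s ([] : List (α × Bool)) := by
  simp [LitsSat]

lemma litsSat_append (s : α → Prop) (K₁ K₂ : List (α × Bool)) :
    LitsSat s (K₁ ++ K₂) ↔ LitsSat s K₁ ∧ LitsSat s K₂ := by
  simp [LitsSat, or_imp, forall_and]

/-- Disjunctive normal form for Boolean combinations. -/
lemma BC.exists_dnf (φ : BC α) :
    (∃ L : List (List (α × Bool)), ∀ s : α → Prop,
        (φ.Sat s ↔ ∃ K ∈ L, LitsSat s K)) ∧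
    (∃ L : List (List (α × Bool)), ∀ s : α → Prop,
        (¬ φ.Sat s ↔ ∃ K ∈ L, LitsSat s K)) := by
  induction φ with
  | tru =>
    exact ⟨⟨[[]], fun s => by simp [BC.Sat]⟩, ⟨[], fun s => by simp [BC.Sat]⟩⟩
  | atom a =>
    refine ⟨⟨[[(a, true)]], fun s => by simp [BC.Sat, LitsSat]⟩,
      ⟨[[(a, false)]], fun s => by simp [BC.Sat, LitsSat]⟩⟩
  | not φ ih =>
    obtain ⟨⟨L, hL⟩, ⟨L', hL'⟩⟩ := ih
    exact ⟨⟨L', fun s => by simp [BC.Sat, hL' s]⟩,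
      ⟨L, fun s => by simp only [BC.Sat, not_not]; exact hL s⟩⟩
  | and φ ψ ih₁ ih₂ =>
    obtain ⟨⟨L₁, hL₁⟩, ⟨L₁', hL₁'⟩⟩ := ih₁
    obtain ⟨⟨L₂, hL₂⟩, ⟨L₂', hL₂'⟩⟩ := ih₂
    constructor
    · refine ⟨L₁.flatMap (fun K₁ => L₂.map (fun K₂ => K₁ ++ K₂)), fun s => ?_⟩
      simp only [BC.Sat, hL₁ s, hL₂ s, List.mem_flatMap, List.mem_map]
      constructor
      · rintro ⟨⟨K₁, h₁, hs₁⟩, ⟨K₂, h₂, hs₂⟩⟩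
        exact ⟨K₁ ++ K₂, ⟨K₁, h₁, K₂, h₂, rfl⟩, (litsSat_append s K₁ K₂).2 ⟨hs₁, hs₂⟩⟩
      · rintro ⟨K, ⟨K₁, h₁, K₂, h₂, rfl⟩, hs⟩
        rw [litsSat_append] at hs
        exact ⟨⟨K₁, h₁, hs.1⟩, ⟨K₂, h₂, hs.2⟩⟩
    · refine ⟨L₁' ++ L₂', fun s => ?_⟩
      simp only [BC.Sat, not_and_or, hL₁' s, hL₂' s, List.mem_append]
      constructor
      · rintro (⟨K, h, hs⟩ | ⟨K, h, hs⟩) <;> exact ⟨K, by tauto, hs⟩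
      · rintro ⟨K, h | h, hs⟩
        · exact Or.inl ⟨K, h, hs⟩
        · exact Or.inr ⟨K, h, hs⟩
  | or φ ψ ih₁ ih₂ =>
    obtain ⟨⟨L₁, hL₁⟩, ⟨L₁', hL₁'⟩⟩ := ih₁
    obtain ⟨⟨L₂, hL₂⟩, ⟨L₂', hL₂'⟩⟩ := ih₂
    constructor
    · refine ⟨L₁ ++ L₂, fun s => ?_⟩
      simp only [BC.Sat, hL₁ s, hL₂ s, List.mem_append]
      constructor
      · rintro (⟨K, h, hs⟩ | ⟨K, h, hs⟩) <;> exact ⟨K, by tauto, hs⟩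
      · rintro ⟨K, h | h, hs⟩
        · exact Or.inl ⟨K, h, hs⟩
        · exact Or.inr ⟨K, h, hs⟩
    · refine ⟨L₁'.flatMap (fun K₁ => L₂'.map (fun K₂ => K₁ ++ K₂)), fun s => ?_⟩
      simp only [BC.Sat, not_or, hL₁' s, hL₂' s, List.mem_flatMap, List.mem_map]
      constructor
      · rintro ⟨⟨K₁, h₁, hs₁⟩, ⟨K₂, h₂, hs₂⟩⟩
        exact ⟨K₁ ++ K₂, ⟨K₁, h₁, K₂, h₂, rfl⟩, (litsSat_append s K₁ K₂).2 ⟨hs₁, hs₂⟩⟩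
      · rintro ⟨K, ⟨K₁, h₁, K₂, h₂, rfl⟩, hs⟩
        rw [litsSat_append] at hs
        exact ⟨⟨K₁, h₁, hs.1⟩, ⟨K₂, h₂, hs.2⟩⟩

end PaperQE
namespace PaperQE

variable {C U F : Type} {D : Type*}

/-! ### Cardinality -/

/-- There are at least `k` elements satisfying `P`. -/
def CardGe (k : ℕ) (P : D → Prop) : Prop := ∃ e : Fin k ↪ D, ∀ i, P (e i)

lemma cardGe_one (P : D → Prop) : CardGe 1 P ↔ ∃ y, P y := by
  constructor
  · rintro ⟨e, he⟩; exact ⟨e 0, he 0⟩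
  · rintro ⟨y, hy⟩
    exact ⟨⟨fun _ => y, fun a b _ => Subsingleton.elim a b⟩, fun _ => hy⟩

@[simp] lemma exists_emb_fin_one {P : D → Prop} :
    (∃ e : Fin 1 ↪ D, ∀ i : Fin 1, P (e i)) ↔ ∃ y, P y := by
  constructor
  · rintro ⟨e, he⟩; exact ⟨e 0, he 0⟩
  · rintro ⟨y, hy⟩
    exact ⟨⟨fun _ => y, fun a b _ => Subsingleton.elim a b⟩, fun _ => hy⟩

lemma cardGe_of_finset {P : D → Prop} (S : Finset D) (h : ∀ x ∈ S, P x) :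
    CardGe S.card P := by
  classical
  refine ⟨((Fintype.equivFinOfCardEq (Fintype.card_coe S)).symm.toEmbedding).trans
    (Function.Embedding.subtype _), fun i => ?_⟩
  exact h _ (by simp)

lemma sat_card_iff (cI : C → D) (uI : U → D → Prop) (fI : F → Equiv.Perm D)
    {n : ℕ} (k : ℕ) (Ψ : BC (NCAtom C U F 1)) (v : Fin n → D) :
    (BAtom.card k Ψ : BAtom C U F n).Sat cI uI fI v ↔
      CardGe k (fun y => Ψ.Sat (fun a => a.Sat cI uI fI (fun _ => y))) :=
  Iff.rfl

/-- The counting core of quantifier elimination: there is an element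
satisfying `P` that avoids all of `t 0, …, t (m-1)` iff there is a set `B` of
pairwise-distinct representatives of the `P`-satisfying excluded elements with
at least `|B| + 1` elements satisfying `P`. -/
lemma counting {m : ℕ} (P : D → Prop) (t : Fin m → D) :
    (∃ y, P y ∧ ∀ s, y ≠ t s) ↔
      ∃ B : Finset (Fin m), (∀ s ∈ B, P (t s)) ∧
        (∀ s ∈ B, ∀ s' ∈ B, s ≠ s' → t s ≠ t s') ∧
        (∀ s, P (t s) → ∃ s' ∈ B, t s = t s') ∧
        CardGe (B.card + 1) P := by
  classical
  constructor
  · rintro ⟨y, hy, hne⟩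
    refine ⟨Finset.univ.filter (fun s => P (t s) ∧ ∀ s' : Fin m, s' < s → t s' ≠ t s),
      ?_, ?_, ?_, ?_⟩
    · intro s hs; exact ((Finset.mem_filter.1 hs).2).1
    · intro s hs s' hs' hss
      have h1 := (Finset.mem_filter.1 hs).2
      have h2 := (Finset.mem_filter.1 hs').2
      rcases lt_or_gt_of_ne hss with h | h
      · exact h2.2 s h
      · exact fun he => (h1.2 s' h) he.symm
    · intro s hPs
      set S : Finset (Fin m) := Finset.univ.filter (fun s' => t s' = t s) with hS
      have hsS : s ∈ S := by simp [hS]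
      have hSne : S.Nonempty := ⟨s, hsS⟩
      set s₀ := S.min' hSne with hs₀
      have hts₀ : t s₀ = t s := by
        have := S.min'_mem hSne; simp [hS] at this; exact this
      refine ⟨s₀, ?_, (hts₀).symm⟩
      refine Finset.mem_filter.2 ⟨Finset.mem_univ _, by rw [hts₀]; exact hPs, ?_⟩
      intro s'' h'' he
      have : s₀ ≤ s'' := S.min'_le s'' (by simp [hS, he, hts₀])
      exact absurd h'' (not_lt.2 this)
    · set B := Finset.univ.filter (fun s => P (t s) ∧ ∀ s' : Fin m, s' < s → t s' ≠ t s)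
        with hB
      have hinj : Set.InjOn t B := by
        intro a ha b hb hab
        by_contra hne'
        have h1 := (Finset.mem_filter.1 ha).2
        have h2 := (Finset.mem_filter.1 hb).2
        rcases lt_or_gt_of_ne hne' with h | h
        · exact h2.2 a h hab
        · exact h1.2 b h hab.symm
      have hyim : y ∉ B.image t := by
        simp only [Finset.mem_image, not_exists]
        rintro s ⟨-, hst⟩
        exact hne s hst.symm
      have hcard : (insert y (B.image t)).card = B.card + 1 := by
        rw [Finset.card_insert_of_notMem hyim, Finset.card_image_of_injOn hinj]
      have := cardGe_of_finset (P := P) (insert y (B.image t)) ?_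
      · rwa [hcard] at this
      · intro x hx
        rcases Finset.mem_insert.1 hx with rfl | hx
        · exact hy
        · obtain ⟨s, hs, rfl⟩ := Finset.mem_image.1 hx
          exact ((Finset.mem_filter.1 hs).2).1
  · rintro ⟨B, hBP, hBinj, hrep, e, he⟩
    set R : Finset D := Finset.univ.map e with hR
    have hRcard : R.card = B.card + 1 := by simp [hR]
    have hTcard : (B.image t).card ≤ B.card := Finset.card_image_le
    have hlt : (B.image t).card < R.card := by omega
    have : ¬ R ⊆ B.image t := fun hsub => absurd (Finset.card_le_card hsub) (by omega)
    obtain ⟨y, hyR, hyT⟩ := Finset.not_subset.1 this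
    obtain ⟨i, -, rfl⟩ := Finset.mem_map.1 hyR
    refine ⟨e i, he i, fun s hst => ?_⟩
    rcases Classical.em (P (t s)) with hPs | hPs
    · obtain ⟨s', hs', hts⟩ := hrep s hPs
      exact hyT (Finset.mem_image.2 ⟨s', hs', by rw [← hts, ← hst]⟩)
    · exact hPs (hst ▸ he i)

end PaperQE
namespace PaperQE

variable {C U F : Type} {D : Type*} {n : ℕ}

lemma snoc_ne_last {v : Fin n → D} {y : D} {i : Fin (n + 1)} (h : i ≠ Fin.last n) :
    (Fin.snoc v y : Fin (n + 1) → D) i = v (i.castPred h) := by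
  conv_lhs => rw [← Fin.castSucc_castPred i h]
  rw [Fin.snoc_castSucc]

/-- Substitute the unique variable of a one-variable atom by the word `W`
applied to the variable `x_j`. -/
def NCAtom.subst1 (W : Word F) (j : Fin n) : NCAtom C U F 1 → NCAtom C U F n
  | .eq a _ b _ => .eq (a ++ W) j (b ++ W) j
  | .eqc a _ c => .eqc (a ++ W) j c
  | .pred u a _ => .pred u (a ++ W) j

lemma sat_subst1 (cI : C → D) (uI : U → D → Prop) (fI : F → Equiv.Perm D)
    (W : Word F) (j : Fin n) (A : NCAtom C U F 1) (v : Fin n → D) :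
    (A.subst1 W j).Sat cI uI fI v ↔ A.Sat cI uI fI (fun _ => evalWord fI W (v j)) := by
  cases A <;> simp [NCAtom.subst1, NCAtom.Sat, evalWord_append]

/-- Structured literals of a conjunction over variables `x_1, …, x_n, y`:
either not mentioning `y` (`free`), an equation `τ(y) = τ'(x_j)` (`t1`),
an equation `τ(y) = c` (`t2`), or a one-variable condition on `y` (`t3`). -/
inductive YLit (C U F : Type) (n : ℕ) : Type
  | free : BAtom C U F n → Bool → YLit C U F n
  | t1 : Word F → Word F → Fin n → Bool → YLit C U F n
  | t2 : Word F → C → Bool → YLit C U F n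
  | t3 : NCAtom C U F 1 → Bool → YLit C U F n

def YLit.Sat (cI : C → D) (uI : U → D → Prop) (fI : F → Equiv.Perm D)
    (v : Fin n → D) (y : D) : YLit C U F n → Prop
  | .free a b => if b then a.Sat cI uI fI v else ¬ a.Sat cI uI fI v
  | .t1 w₁ w₂ j b => if b then evalWord fI w₁ y = evalWord fI w₂ (v j)
      else ¬ evalWord fI w₁ y = evalWord fI w₂ (v j)
  | .t2 w c b => if b then evalWord fI w y = cI c else ¬ evalWord fI w y = cI c
  | .t3 A b => if b then A.Sat cI uI fI (fun _ => y) else ¬ A.Sat cI uI fI (fun _ => y)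

/-- Classify a signed atom over `n+1` variables as a structured literal. -/
def classify : BAtom C U F (n + 1) × Bool → YLit C U F n
  | (.nc (.eq w₁ i w₂ j), b) =>
    if hi : i = Fin.last n then
      if hj : j = Fin.last n then .t3 (.eq w₁ 0 w₂ 0) b
      else .t1 w₁ w₂ (j.castPred hj) b
    else
      if hj : j = Fin.last n then .t1 w₂ w₁ (i.castPred hi) b
      else .free (.nc (.eq w₁ (i.castPred hi) w₂ (j.castPred hj))) b
  | (.nc (.eqc w i c), b) =>
    if hi : i = Fin.last n then .t2 w c b
    else .free (.nc (.eqc w (i.castPred hi) c)) b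
  | (.nc (.pred u w i), b) =>
    if hi : i = Fin.last n then .t3 (.pred u w 0) b
    else .free (.nc (.pred u w (i.castPred hi))) b
  | (.card k Ψ, b) => .free (.card k Ψ) b

lemma sat_classify (cI : C → D) (uI : U → D → Prop) (fI : F → Equiv.Perm D)
    (v : Fin n → D) (y : D) (l : BAtom C U F (n + 1) × Bool) :
    (classify l).Sat cI uI fI v y ↔
      (if l.2 then l.1.Sat cI uI fI (Fin.snoc v y)
        else ¬ l.1.Sat cI uI fI (Fin.snoc v y)) := by
  obtain ⟨a, b⟩ := l
  cases a with
  | nc A =>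
    cases A with
    | eq w₁ i w₂ j =>
      by_cases hi : i = Fin.last n <;> by_cases hj : j = Fin.last n
      · subst hi; subst hj
        simp [classify, YLit.Sat, BAtom.Sat, NCAtom.Sat, Fin.snoc_last]
      · subst hi
        simp [classify, hj, YLit.Sat, BAtom.Sat, NCAtom.Sat, Fin.snoc_last,
          snoc_ne_last hj]
      · subst hj
        simp only [classify, hi, dif_neg, dif_pos, YLit.Sat, BAtom.Sat, NCAtom.Sat,
          Fin.snoc_last, snoc_ne_last hi]
        cases b <;> simp [eq_comm]
      · simp [classify, hi, hj, YLit.Sat, BAtom.Sat, NCAtom.Sat,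
          snoc_ne_last hi, snoc_ne_last hj]
    | eqc w i c =>
      by_cases hi : i = Fin.last n
      · subst hi; simp [classify, YLit.Sat, BAtom.Sat, NCAtom.Sat, Fin.snoc_last]
      · simp [classify, hi, YLit.Sat, BAtom.Sat, NCAtom.Sat, snoc_ne_last hi]
    | pred u w i =>
      by_cases hi : i = Fin.last n
      · subst hi; simp [classify, YLit.Sat, BAtom.Sat, NCAtom.Sat, Fin.snoc_last]
      · simp [classify, hi, YLit.Sat, BAtom.Sat, NCAtom.Sat, snoc_ne_last hi]
  | card k Ψ =>
    simp [classify, YLit.Sat, BAtom.Sat]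

end PaperQE
namespace PaperQE

variable {C U F : Type} {D : Type*} {n : ℕ}

def YLit.posT1? : YLit C U F n → Option (Word F × Word F × Fin n)
  | .t1 w₁ w₂ j true => some (w₁, w₂, j)
  | _ => none

def YLit.posT2? : YLit C U F n → Option (Word F × C)
  | .t2 w c true => some (w, c)
  | _ => none

lemma YLit.posT1?_eq_some {m : YLit C U F n} {x : Word F × Word F × Fin n}
    (h : m.posT1? = some x) : m = .t1 x.1 x.2.1 x.2.2 true := by
  cases m with
  | t1 w₁ w₂ j b =>
    cases b
    · simp [YLit.posT1?] at h
    · simp only [YLit.posT1?, Option.some.injEq] at h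
      rw [← h]
  | free a b => simp [YLit.posT1?] at h
  | t2 w c b => simp [YLit.posT1?] at h
  | t3 A b => simp [YLit.posT1?] at h

lemma YLit.posT2?_eq_some {m : YLit C U F n} {x : Word F × C}
    (h : m.posT2? = some x) : m = .t2 x.1 x.2 true := by
  cases m with
  | t2 w c b =>
    cases b
    · simp [YLit.posT2?] at h
    · simp only [YLit.posT2?, Option.some.injEq] at h
      rw [← h]
  | free a b => simp [YLit.posT2?] at h
  | t1 w₁ w₂ j b => simp [YLit.posT2?] at h
  | t3 A b => simp [YLit.posT2?] at h

/-! ### Case A : a positive literal `τ(y) = τ'(x_j)` is present -/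

def YLit.substY (W : Word F) (j : Fin n) : YLit C U F n → BC (BAtom C U F n)
  | .free a b => .lit a b
  | .t1 a b' j' s => .lit (.nc (.eq (a ++ W) j b' j')) s
  | .t2 a c s => .lit (.nc (.eqc (a ++ W) j c)) s
  | .t3 A s => .lit (.nc (A.subst1 W j)) s

lemma sat_substY (cI : C → D) (uI : U → D → Prop) (fI : F → Equiv.Perm D)
    (W : Word F) (j : Fin n) (v : Fin n → D) (m : YLit C U F n) :
    (m.substY W j).Sat (fun a => a.Sat cI uI fI v) ↔
      m.Sat cI uI fI v (evalWord fI W (v j)) := by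
  cases m with
  | free a b => cases b <;> simp [YLit.substY, YLit.Sat]
  | t1 a b' j' s =>
    cases s <;> simp [YLit.substY, YLit.Sat, BAtom.Sat, NCAtom.Sat, evalWord_append]
  | t2 a c s =>
    cases s <;> simp [YLit.substY, YLit.Sat, BAtom.Sat, NCAtom.Sat, evalWord_append]
  | t3 A s => cases s <;> simp [YLit.substY, YLit.Sat, BAtom.Sat, sat_subst1]

lemma caseA (cI : C → D) (uI : U → D → Prop) (fI : F → Equiv.Perm D)
    (v : Fin n → D) (M : List (YLit C U F n)) (w₁ w₂ : Word F) (j : Fin n)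
    (hmem : YLit.t1 w₁ w₂ j true ∈ M) :
    (∃ y, ∀ m ∈ M, m.Sat cI uI fI v y) ↔
      (BC.conjList (M.map (YLit.substY (winv w₁ ++ w₂) j))).Sat
        (fun a => a.Sat cI uI fI v) := by
  rw [BC.sat_conjList]
  simp only [List.mem_map, forall_exists_index, and_imp]
  constructor
  · rintro ⟨y, hy⟩
    have h1 := hy _ hmem
    simp only [YLit.Sat, if_pos] at h1
    have hyW : y = evalWord fI (winv w₁ ++ w₂) (v j) := by
      rw [evalWord_eq_iff] at h1
      rw [h1, evalWord_append]
    rintro β m hm rfl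
    rw [sat_substY, ← hyW]
    exact hy m hm
  · intro h
    refine ⟨evalWord fI (winv w₁ ++ w₂) (v j), fun m hm => ?_⟩
    rw [← sat_substY]
    exact h _ m hm rfl

/-! ### Case B : a positive literal `τ(y) = c` is present -/

def YLit.elimB (w : Word F) (c : C) : YLit C U F n → BC (BAtom C U F n)
  | .free a b => .lit a b
  | .t1 a b' j s => .lit (.nc (.eqc (w ++ (winv a ++ b')) j c)) s
  | .t2 a c' s => .atom (.card 1 (.and (.atom (.eqc w 0 c)) (.lit (.eqc a 0 c') s)))
  | .t3 A s => .atom (.card 1 (.and (.atom (.eqc w 0 c)) (.lit A s)))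

lemma sat_elimB (cI : C → D) (uI : U → D → Prop) (fI : F → Equiv.Perm D)
    (v : Fin n → D) (w : Word F) (c : C) (m : YLit C U F n) :
    (m.elimB w c).Sat (fun a => a.Sat cI uI fI v) ↔
      m.Sat cI uI fI v (evalWord fI (winv w) (cI c)) := by
  have hwe : ∀ x : D, evalWord fI w x = cI c ↔ x = evalWord fI (winv w) (cI c) :=
    fun x => evalWord_eq_iff fI w x (cI c)
  cases m with
  | free a b => cases b <;> simp [YLit.elimB, YLit.Sat]
  | t1 a b' j s =>
    have key : evalWord fI (w ++ (winv a ++ b')) (v j) = cI c ↔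
        evalWord fI a (evalWord fI (winv w) (cI c)) = evalWord fI b' (v j) := by
      rw [evalWord_append, hwe, evalWord_append]
      rw [evalWord_eq_iff fI (winv a), winv_winv]
      exact eq_comm
    cases s <;> simp [YLit.elimB, YLit.Sat, BAtom.Sat, NCAtom.Sat, key]
  | t2 a c' s =>
    cases s <;>
      simp only [YLit.elimB, YLit.Sat, BC.Sat, BAtom.Sat, NCAtom.Sat, hwe,
        BC.sat_lit, if_true, if_false, Bool.false_eq_true, ite_false, ite_true] <;>
      constructor
    · rintro ⟨e, he⟩
      obtain ⟨h1, h2⟩ := he 0; rw [← h1]; exact h2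
    · intro h
      exact ⟨⟨fun _ => _, fun a b _ => Subsingleton.elim a b⟩, fun i => ⟨rfl, h⟩⟩
    · rintro ⟨e, he⟩
      obtain ⟨h1, h2⟩ := he 0; rw [← h1]; exact h2
    · intro h
      exact ⟨⟨fun _ => _, fun a b _ => Subsingleton.elim a b⟩, fun i => ⟨rfl, h⟩⟩
  | t3 A s =>
    cases A <;> cases s <;>
      simp only [YLit.elimB, YLit.Sat, BC.Sat, BAtom.Sat, NCAtom.Sat, hwe,
        BC.sat_lit, if_true, if_false, Bool.false_eq_true, ite_false, ite_true] <;>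
      (constructor
       · rintro ⟨e, he⟩
         obtain ⟨h1, h2⟩ := he 0; rw [← h1]; exact h2
       · intro h
         exact ⟨⟨fun _ => _, fun a b _ => Subsingleton.elim a b⟩, fun i => ⟨rfl, h⟩⟩)

lemma caseB (cI : C → D) (uI : U → D → Prop) (fI : F → Equiv.Perm D)
    (v : Fin n → D) (M : List (YLit C U F n)) (w : Word F) (c : C)
    (hmem : YLit.t2 w c true ∈ M) :
    (∃ y, ∀ m ∈ M, m.Sat cI uI fI v y) ↔
      (BC.conjList (M.map (YLit.elimB w c))).Sat (fun a => a.Sat cI uI fI v) := by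
  rw [BC.sat_conjList]
  simp only [List.mem_map, forall_exists_index, and_imp]
  constructor
  · rintro ⟨y, hy⟩
    have h1 := hy _ hmem
    simp only [YLit.Sat, if_pos] at h1
    have hyW : y = evalWord fI (winv w) (cI c) := by
      rw [evalWord_eq_iff] at h1; exact h1
    rintro β m hm rfl
    rw [sat_elimB, ← hyW]
    exact hy m hm
  · intro h
    refine ⟨evalWord fI (winv w) (cI c), fun m hm => ?_⟩
    rw [← sat_elimB]
    exact h _ m hm rfl

end PaperQE
namespace PaperQE

variable {C U F : Type} {D : Type*} {n : ℕ}

/-! ### Case C : no positive equation involving `y` -/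

def YLit.freePart : YLit C U F n → Option (BAtom C U F n × Bool)
  | .free a b => some (a, b)
  | _ => none

def YLit.onePart : YLit C U F n → Option (BC (NCAtom C U F 1))
  | .t2 a c s => some (.lit (.eqc a 0 c) s)
  | .t3 A s => some (.lit A s)
  | _ => none

def YLit.exclPart : YLit C U F n → Option (Word F × Fin n)
  | .t1 a b j false => some (winv a ++ b, j)
  | _ => none

lemma caseC_decomp (cI : C → D) (uI : U → D → Prop) (fI : F → Equiv.Perm D)
    (v : Fin n → D) (y : D) :
    ∀ (M : List (YLit C U F n)),
      (∀ m ∈ M, m.posT1? = none) → (∀ m ∈ M, m.posT2? = none) →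
      ((∀ m ∈ M, m.Sat cI uI fI v y) ↔
        (LitsSat (fun a => a.Sat cI uI fI v) (M.filterMap YLit.freePart) ∧
         (BC.conjList (M.filterMap YLit.onePart)).Sat
            (fun A => A.Sat cI uI fI (fun _ => y)) ∧
         (∀ p ∈ M.filterMap YLit.exclPart, y ≠ evalWord fI p.1 (v p.2)))) := by
  intro M
  induction M with
  | nil => simp [LitsSat]
  | cons m M ih =>
    intro h1 h2
    have ih' := ih (fun m hm => h1 m (List.mem_cons_of_mem _ hm))
      (fun m hm => h2 m (List.mem_cons_of_mem _ hm))
    have hm1 := h1 m List.mem_cons_self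
    have hm2 := h2 m List.mem_cons_self
    cases m with
    | free a b =>
      simp only [List.filterMap_cons, YLit.freePart, YLit.onePart, YLit.exclPart,
        List.forall_mem_cons, ih', YLit.Sat, LitsSat]
      simp only [LitsSat] at ih' ⊢
      tauto
    | t1 a b' j s =>
      cases s
      · simp only [List.filterMap_cons, YLit.freePart, YLit.onePart, YLit.exclPart,
          List.forall_mem_cons, ih', YLit.Sat, if_false, Bool.false_eq_true, ite_false]
        have key : evalWord fI a y = evalWord fI b' (v j) ↔
            y = evalWord fI (winv a ++ b') (v j) := by
          rw [evalWord_eq_iff, evalWord_append]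
        rw [key]
        tauto
      · simp [YLit.posT1?] at hm1
    | t2 a c s =>
      cases s
      · simp only [List.filterMap_cons, YLit.onePart, YLit.exclPart, YLit.freePart,
          List.forall_mem_cons, ih', YLit.Sat, BC.conjList, BC.Sat, BC.sat_lit,
          NCAtom.Sat, if_false, Bool.false_eq_true, ite_false]
        tauto
      · simp [YLit.posT2?] at hm2
    | t3 A s =>
      cases s <;>
        · simp only [List.filterMap_cons, YLit.onePart, YLit.exclPart, YLit.freePart,
            List.forall_mem_cons, ih', YLit.Sat, BC.conjList, BC.Sat, BC.sat_lit,
            if_false, if_true, Bool.false_eq_true, ite_false, ite_true]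
          tauto

/-! components of the counting-case Boolean combination -/

def freeBC (M : List (YLit C U F n)) : BC (BAtom C U F n) :=
  BC.conjList ((M.filterMap YLit.freePart).map (fun l => BC.lit l.1 l.2))

def onePsi (M : List (YLit C U F n)) : BC (NCAtom C U F 1) :=
  BC.conjList (M.filterMap YLit.onePart)

def exclE (M : List (YLit C U F n)) : List (Word F × Fin n) :=
  M.filterMap YLit.exclPart

def psiAt (M : List (YLit C U F n)) (s : Fin (exclE M).length) :
    BC (BAtom C U F n) :=
  BC.map (fun A => BAtom.nc (A.subst1 ((exclE M).get s).1 ((exclE M).get s).2))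
    (onePsi M)

def eqAt (M : List (YLit C U F n)) (s s' : Fin (exclE M).length) :
    BAtom C U F n :=
  .nc (.eq ((exclE M).get s).1 ((exclE M).get s).2
        ((exclE M).get s').1 ((exclE M).get s').2)

noncomputable def disjunctBC (M : List (YLit C U F n))
    (B : Finset (Fin (exclE M).length)) : BC (BAtom C U F n) :=
  BC.conjList [
    BC.conjList (B.toList.map (psiAt M)),
    BC.conjList (B.toList.map (fun s => BC.conjList (B.toList.map (fun s' =>
      if s = s' then BC.tru else BC.not (.atom (eqAt M s s')))))),
    BC.conjList ((List.finRange (exclE M).length).map (fun s =>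
      BC.or (BC.not (psiAt M s)) (BC.disjList (B.toList.map (fun s' =>
        .atom (eqAt M s s')))))),
    .atom (.card (B.card + 1) (onePsi M))]

noncomputable def caseCBC (M : List (YLit C U F n)) : BC (BAtom C U F n) :=
  .and (freeBC M)
    (BC.disjList
      (((Finset.univ : Finset (Finset (Fin (exclE M).length))).toList).map
        (disjunctBC M)))

section CaseCSat

variable (cI : C → D) (uI : U → D → Prop) (fI : F → Equiv.Perm D)
  (v : Fin n → D) (M : List (YLit C U F n))

/-- `P y`: the one-variable part holds of `y`. -/
def onePsiP (y : D) : Prop := (onePsi M).Sat (fun A => A.Sat cI uI fI (fun _ => y))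

/-- `tval s`: the `s`-th excluded element. -/
def tval (s : Fin (exclE M).length) : D :=
  evalWord fI ((exclE M).get s).1 (v ((exclE M).get s).2)

lemma sat_psiAt (s : Fin (exclE M).length) :
    (psiAt M s).Sat (fun a => a.Sat cI uI fI v) ↔ onePsiP cI uI fI M (tval fI v M s) := by
  rw [psiAt, BC.sat_map, onePsiP, tval]
  exact BC.sat_congr _ (fun A _ => sat_subst1 cI uI fI _ _ A v)

lemma sat_eqAt (s s' : Fin (exclE M).length) :
    (eqAt M s s').Sat cI uI fI v ↔ tval fI v M s = tval fI v M s' := by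
  simp [eqAt, BAtom.Sat, NCAtom.Sat, tval]

lemma sat_disjunctBC (B : Finset (Fin (exclE M).length)) :
    (disjunctBC M B).Sat (fun a => a.Sat cI uI fI v) ↔
      ((∀ s ∈ B, onePsiP cI uI fI M (tval fI v M s)) ∧
       (∀ s ∈ B, ∀ s' ∈ B, s ≠ s' → tval fI v M s ≠ tval fI v M s') ∧
       (∀ s, onePsiP cI uI fI M (tval fI v M s) →
          ∃ s' ∈ B, tval fI v M s = tval fI v M s') ∧
       CardGe (B.card + 1) (onePsiP cI uI fI M)) := by
  have h4 : (BC.atom (.card (B.card + 1) (onePsi M)) :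
      BC (BAtom C U F n)).Sat (fun a => a.Sat cI uI fI v) ↔
      CardGe (B.card + 1) (onePsiP cI uI fI M) := Iff.rfl
  simp only [disjunctBC, BC.conjList, BC.Sat, and_true]
  constructor
  · rintro ⟨hq1, hq2, hq3, hq4⟩
    refine ⟨?_, ?_, ?_, h4.1 hq4⟩
    · intro s hs
      rw [BC.sat_conjList] at hq1
      exact (sat_psiAt cI uI fI v M s).1
        (hq1 _ (List.mem_map.2 ⟨s, Finset.mem_toList.2 hs, rfl⟩))
    · intro s hs s' hs' hss
      rw [BC.sat_conjList] at hq2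
      have := hq2 _ (List.mem_map.2 ⟨s, Finset.mem_toList.2 hs, rfl⟩)
      rw [BC.sat_conjList] at this
      have := this _ (List.mem_map.2 ⟨s', Finset.mem_toList.2 hs', rfl⟩)
      rw [if_neg hss] at this
      simpa only [BC.Sat, sat_eqAt] using this
    · intro s hPs
      rw [BC.sat_conjList] at hq3
      have := hq3 _ (List.mem_map.2 ⟨s, List.mem_finRange s, rfl⟩)
      simp only [BC.Sat] at this
      rcases this with h | h
      · exact absurd ((sat_psiAt cI uI fI v M s).2 hPs) h
      · rw [BC.sat_disjList] at h
        obtain ⟨γ, hγ, hsat⟩ := h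
        obtain ⟨s', hs', rfl⟩ := List.mem_map.1 hγ
        refine ⟨s', Finset.mem_toList.1 hs', ?_⟩
        simpa only [BC.Sat, sat_eqAt] using hsat
  · rintro ⟨hB1, hB2, hB3, hB4⟩
    refine ⟨?_, ?_, ?_, h4.2 hB4⟩
    · rw [BC.sat_conjList]
      intro γ hγ
      obtain ⟨s, hs, rfl⟩ := List.mem_map.1 hγ
      exact (sat_psiAt cI uI fI v M s).2 (hB1 s (Finset.mem_toList.1 hs))
    · rw [BC.sat_conjList]
      intro γ hγ
      obtain ⟨s, hs, rfl⟩ := List.mem_map.1 hγ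
      rw [BC.sat_conjList]
      intro δ hδ
      obtain ⟨s', hs', rfl⟩ := List.mem_map.1 hδ
      by_cases hss : s = s'
      · simp [hss, BC.Sat]
      · rw [if_neg hss]
        simp only [BC.Sat, sat_eqAt]
        exact hB2 s (Finset.mem_toList.1 hs) s' (Finset.mem_toList.1 hs') hss
    · rw [BC.sat_conjList]
      intro γ hγ
      obtain ⟨s, -, rfl⟩ := List.mem_map.1 hγ
      simp only [BC.Sat]
      by_cases hPs : onePsiP cI uI fI M (tval fI v M s)
      · right
        rw [BC.sat_disjList]
        obtain ⟨s', hs', hts⟩ := hB3 s hPs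
        exact ⟨_, List.mem_map.2 ⟨s', Finset.mem_toList.2 hs', rfl⟩,
          by simpa only [BC.Sat, sat_eqAt] using hts⟩
      · left
        intro hc
        exact hPs ((sat_psiAt cI uI fI v M s).1 hc)

lemma caseC (h1 : ∀ m ∈ M, YLit.posT1? m = none)
    (h2 : ∀ m ∈ M, YLit.posT2? m = none) :
    (∃ y, ∀ m ∈ M, m.Sat cI uI fI v y) ↔
      (caseCBC M).Sat (fun a => a.Sat cI uI fI v) := by
  classical
  have hexcl : ∀ y : D, (∀ p ∈ exclE M, y ≠ evalWord fI p.1 (v p.2)) ↔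
      ∀ s, y ≠ tval fI v M s := by
    intro y
    constructor
    · intro h s; exact h _ (List.get_mem _ _)
    · intro h p hp
      obtain ⟨s, rfl⟩ := List.mem_iff_get.1 hp
      exact h s
  have lhs : (∃ y, ∀ m ∈ M, m.Sat cI uI fI v y) ↔
      (LitsSat (fun a => a.Sat cI uI fI v) (M.filterMap YLit.freePart) ∧
       ∃ y, onePsiP cI uI fI M y ∧ ∀ s, y ≠ tval fI v M s) := by
    constructor
    · rintro ⟨y, hy⟩
      rw [caseC_decomp cI uI fI v y M h1 h2] at hy
      exact ⟨hy.1, y, hy.2.1, (hexcl y).1 hy.2.2⟩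
    · rintro ⟨hfr, y, hPy, hy⟩
      exact ⟨y, (caseC_decomp cI uI fI v y M h1 h2).2 ⟨hfr, hPy, (hexcl y).2 hy⟩⟩
  rw [lhs, counting (onePsiP cI uI fI M) (tval fI v M)]
  have hfree : (freeBC M).Sat (fun a => a.Sat cI uI fI v) ↔
      LitsSat (fun a => a.Sat cI uI fI v) (M.filterMap YLit.freePart) := by
    rw [freeBC, BC.sat_conjList]
    constructor
    · intro h l hl
      have := h _ (List.mem_map.2 ⟨l, hl, rfl⟩)
      rwa [BC.sat_lit] at this
    · intro h γ hγ
      obtain ⟨l, hl, rfl⟩ := List.mem_map.1 hγ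
      rw [BC.sat_lit]
      exact h l hl
  simp only [caseCBC, BC.Sat, hfree, BC.sat_disjList, List.mem_map,
    Finset.mem_toList, Finset.mem_univ, true_and]
  constructor
  · rintro ⟨hfr, B, hB⟩
    exact ⟨hfr, _, ⟨B, rfl⟩, (sat_disjunctBC cI uI fI v M B).2 hB⟩
  · rintro ⟨hfr, γ, ⟨B, rfl⟩, hB⟩
    exact ⟨hfr, B, (sat_disjunctBC cI uI fI v M B).1 hB⟩

end CaseCSat

end PaperQE
namespace PaperQE

variable {C U F : Type} {n : ℕ}

lemma elimConj (M : List (YLit C U F n)) :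
    ∃ γ : BC (BAtom C U F n), ∀ (D : Type*) (cI : C → D) (uI : U → D → Prop)
      (fI : F → Equiv.Perm D) (v : Fin n → D),
      ((∃ y, ∀ m ∈ M, m.Sat cI uI fI v y) ↔ γ.Sat (fun a => a.Sat cI uI fI v)) := by
  cases hT1 : M.findSome? YLit.posT1? with
  | some x =>
    obtain ⟨m, hm, hx⟩ := List.exists_of_findSome?_eq_some hT1
    rw [YLit.posT1?_eq_some hx] at hm
    exact ⟨_, fun D cI uI fI v => caseA cI uI fI v M x.1 x.2.1 x.2.2 hm⟩
  | none =>
    have h1 : ∀ m ∈ M, YLit.posT1? m = none := List.findSome?_eq_none_iff.1 hT1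
    cases hT2 : M.findSome? YLit.posT2? with
    | some x =>
      obtain ⟨m, hm, hx⟩ := List.exists_of_findSome?_eq_some hT2
      rw [YLit.posT2?_eq_some hx] at hm
      exact ⟨_, fun D cI uI fI v => caseB cI uI fI v M x.1 x.2 hm⟩
    | none =>
      have h2 : ∀ m ∈ M, YLit.posT2? m = none := List.findSome?_eq_none_iff.1 hT2
      exact ⟨_, fun D cI uI fI v => caseC cI uI fI v M h1 h2⟩

lemma lits_classify {D : Type*} (cI : C → D) (uI : U → D → Prop)
    (fI : F → Equiv.Perm D) (v : Fin n → D) (y : D)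
    (K : List (BAtom C U F (n + 1) × Bool)) :
    LitsSat (fun a => a.Sat cI uI fI (Fin.snoc v y)) K ↔
      ∀ m ∈ K.map classify, m.Sat cI uI fI v y := by
  simp only [LitsSat, List.forall_mem_map, sat_classify]

lemma exElimList (L : List (List (BAtom C U F (n + 1) × Bool))) :
    ∃ γ : BC (BAtom C U F n), ∀ (D : Type*) (cI : C → D) (uI : U → D → Prop)
      (fI : F → Equiv.Perm D) (v : Fin n → D),
      ((∃ y, ∃ K ∈ L, LitsSat (fun a => a.Sat cI uI fI (Fin.snoc v y)) K) ↔
        γ.Sat (fun a => a.Sat cI uI fI v)) := by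
  induction L with
  | nil => exact ⟨.not .tru, by simp [BC.Sat]⟩
  | cons K L ih =>
    obtain ⟨γL, hγL⟩ := ih
    obtain ⟨γK, hγK⟩ := elimConj (K.map classify)
    refine ⟨.or γK γL, fun D cI uI fI v => ?_⟩
    simp only [List.mem_cons, exists_eq_or_imp, exists_or, BC.Sat]
    constructor
    · rintro (h | h)
      · exact Or.inl ((hγK D cI uI fI v).1 (by
          obtain ⟨y, hy⟩ := h
          exact ⟨y, (lits_classify cI uI fI v y K).1 hy⟩))
      · exact Or.inr ((hγL D cI uI fI v).1 h)
    · rintro (h | h)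
      · obtain ⟨y, hy⟩ := (hγK D cI uI fI v).2 h
        exact Or.inl ⟨y, (lits_classify cI uI fI v y K).2 hy⟩
      · exact Or.inr ((hγL D cI uI fI v).2 h)

lemma exElimBC (β : BC (BAtom C U F (n + 1))) :
    ∃ γ : BC (BAtom C U F n), ∀ (D : Type*) (cI : C → D) (uI : U → D → Prop)
      (fI : F → Equiv.Perm D) (v : Fin n → D),
      ((∃ y, β.Sat (fun a => a.Sat cI uI fI (Fin.snoc v y))) ↔
        γ.Sat (fun a => a.Sat cI uI fI v)) := by
  obtain ⟨L, hL⟩ := (BC.exists_dnf β).1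
  obtain ⟨γ, hγ⟩ := exElimList L
  refine ⟨γ, fun D cI uI fI v => ?_⟩
  rw [← hγ D cI uI fI v]
  exact exists_congr fun y => hL _

theorem qe {n : ℕ} (φ : BForm C U F n) :
    ∃ β : BC (BAtom C U F n), ∀ (D : Type*) (cI : C → D) (uI : U → D → Prop)
      (fI : F → Equiv.Perm D) (v : Fin n → D),
      (φ.Sat cI uI fI v ↔ β.Sat (fun a => a.Sat cI uI fI v)) := by
  induction φ with
  | atom a => exact ⟨.atom a, fun D cI uI fI v => by simp [BForm.Sat, BC.Sat]⟩
  | not φ ih =>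
    obtain ⟨β, hβ⟩ := ih
    exact ⟨.not β, fun D cI uI fI v => by
      simp only [BForm.Sat, BC.Sat, hβ D cI uI fI v]⟩
  | and φ ψ ih₁ ih₂ =>
    obtain ⟨β₁, hβ₁⟩ := ih₁
    obtain ⟨β₂, hβ₂⟩ := ih₂
    exact ⟨.and β₁ β₂, fun D cI uI fI v => by
      simp only [BForm.Sat, BC.Sat, hβ₁ D cI uI fI v, hβ₂ D cI uI fI v]⟩
  | or φ ψ ih₁ ih₂ =>
    obtain ⟨β₁, hβ₁⟩ := ih₁
    obtain ⟨β₂, hβ₂⟩ := ih₂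
    exact ⟨.or β₁ β₂, fun D cI uI fI v => by
      simp only [BForm.Sat, BC.Sat, hβ₁ D cI uI fI v, hβ₂ D cI uI fI v]⟩
  | ex φ ih =>
    obtain ⟨β, hβ⟩ := ih
    obtain ⟨γ, hγ⟩ := exElimBC β
    refine ⟨γ, fun D cI uI fI v => ?_⟩
    rw [← hγ D cI uI fI v]
    exact exists_congr fun y => hβ D cI uI fI _
  | all φ ih =>
    obtain ⟨β, hβ⟩ := ih
    obtain ⟨γ, hγ⟩ := exElimBC (.not β)
    refine ⟨.not γ, fun D cI uI fI v => ?_⟩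
    simp only [BForm.Sat, BC.Sat]
    rw [← hγ D cI uI fI v]
    constructor
    · rintro h ⟨y, hy⟩
      exact hy ((hβ D cI uI fI _).1 (h y))
    · intro h y
      by_contra hc
      exact h ⟨y, fun hs => hc ((hβ D cI uI fI _).2 hs)⟩

end PaperQE
namespace PaperQE

variable {C U F : Type} {p : ℕ}

lemma mem_conjSet_iff {D : Type*} (cI : C → D) (uI : U → D → Prop)
    (fI : F → Equiv.Perm D) (K : List (BAtom C U F p × Bool)) (v : Fin p → D) :
    v ∈ ConjSet cI uI fI K ↔ LitsSat (fun a => a.Sat cI uI fI v) K := Iff.rfl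

lemma exists_disjoint_patterns (β : BC (BAtom C U F p)) :
    ∃ (r : ℕ) (Ψ : Fin r → List (BAtom C U F p × Bool)),
      ∀ (D : Type*) (cI : C → D) (uI : U → D → Prop) (fI : F → Equiv.Perm D),
        ({v : Fin p → D | β.Sat (fun a => a.Sat cI uI fI v)} =
            ⋃ i, ConjSet cI uI fI (Ψ i)) ∧
        ∀ i j : Fin r, i ≠ j →
          ConjSet cI uI fI (Ψ i) ∩ ConjSet cI uI fI (Ψ j) = ∅ := by
  classical
  set L := β.atoms with hLdef
  rcases Nat.eq_zero_or_pos L.length with hN | hN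
  · -- no atoms: the truth value of β is structure-independent
    have hL : L = [] := List.length_eq_zero_iff.1 hN
    by_cases htruth : β.Sat (fun _ => True)
    · refine ⟨1, fun _ => [], fun D cI uI fI => ⟨?_, ?_⟩⟩
      · ext v
        simp only [Set.mem_setOf_eq, Set.mem_iUnion]
        constructor
        · intro _; exact ⟨0, by simp [ConjSet]⟩
        · intro _
          rw [BC.sat_congr β (s' := fun _ => True) (by rw [← hLdef, hL]; simp)]
          exact htruth
      · intro i j hij
        exact absurd (Subsingleton.elim i j) hij
    · refine ⟨0, Fin.elim0, fun D cI uI fI => ⟨?_, fun i => i.elim0⟩⟩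
      ext v
      simp only [Set.mem_setOf_eq, Set.mem_iUnion]
      constructor
      · intro hv
        exact absurd ((BC.sat_congr β (s' := fun _ => True)
          (by rw [← hLdef, hL]; simp)).1 hv) htruth
      · rintro ⟨i, -⟩; exact i.elim0
  · -- at least one atom
    set N := L.length with hNdef
    let idx : Fin (2 ^ N) ≃ (Fin N → Bool) :=
      finFunctionFinEquiv.symm.trans
        (Equiv.arrowCongr (Equiv.refl (Fin N)) finTwoEquiv)
    let good : (Fin N → Bool) → Prop := fun t =>
      ∃ s : BAtom C U F p → Prop, (∀ i : Fin N, (t i = true ↔ s (L.get i))) ∧ β.Sat s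
    let Ψ : Fin (2 ^ N) → List (BAtom C U F p × Bool) := fun i =>
      if good (idx i) then List.ofFn (fun k => (L.get k, idx i k))
      else [(L.get ⟨0, hN⟩, true), (L.get ⟨0, hN⟩, false)]
    refine ⟨2 ^ N, Ψ, fun D cI uI fI => ?_⟩
    have hbad : ∀ (i : Fin (2 ^ N)) (v : Fin p → D),
        ¬ good (idx i) → v ∉ ConjSet cI uI fI (Ψ i) := by
      intro i v hg hv
      rw [mem_conjSet_iff] at hv
      simp only [Ψ, if_neg hg] at hv
      have h1 := hv _ List.mem_cons_self
      have h2 := hv _ (List.mem_cons_of_mem _ List.mem_cons_self)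
      simp only [if_true, if_false, Bool.false_eq_true, ite_true, ite_false] at h1 h2
      exact h2 h1
    have hgoodmem : ∀ (i : Fin (2 ^ N)) (v : Fin p → D),
        good (idx i) →
        (v ∈ ConjSet cI uI fI (Ψ i) ↔
          ∀ k : Fin N, ((idx i) k = true ↔ (L.get k).Sat cI uI fI v)) := by
      intro i v hg
      rw [mem_conjSet_iff]
      simp only [Ψ, if_pos hg, LitsSat]
      constructor
      · intro h k
        have hthis := h _ (by rw [List.mem_ofFn]; exact ⟨k, rfl⟩)
        dsimp only at hthis
        cases hc : (idx i) k
        · rw [hc] at hthis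
          simp only [Bool.false_eq_true, ite_false] at hthis
          exact iff_of_false (by simp) hthis
        · rw [hc] at hthis
          simp only [ite_true] at hthis
          exact iff_of_true rfl hthis
      · intro h l hl
        rw [List.mem_ofFn] at hl
        obtain ⟨k, rfl⟩ := hl
        dsimp only
        cases hc : (idx i) k
        · simp only [hc, Bool.false_eq_true, ite_false]
          intro hh
          have := (h k).2 hh
          rw [hc] at this
          exact absurd this (by simp)
        · simp only [hc, ite_true]
          exact (h k).1 hc
    refine ⟨?_, ?_⟩
    · ext v
      simp only [Set.mem_setOf_eq, Set.mem_iUnion]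
      constructor
      · intro hv
        set t : Fin N → Bool := fun k => decide ((L.get k).Sat cI uI fI v) with htdef
        have hg : good t := ⟨fun a => a.Sat cI uI fI v,
          fun k => by simp [htdef], hv⟩
        refine ⟨idx.symm t, ?_⟩
        rw [hgoodmem _ v (by rwa [Equiv.apply_symm_apply])]
        intro k
        rw [Equiv.apply_symm_apply]
        simp [htdef]
      · rintro ⟨i, hv⟩
        by_cases hg : good (idx i)
        · rw [hgoodmem i v hg] at hv
          obtain ⟨s, hs, hsat⟩ := hg
          rw [BC.sat_congr β (s' := s)]
          · exact hsat
          · intro a ha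
            rw [← hLdef] at ha
            obtain ⟨k, rfl⟩ := List.mem_iff_get.1 ha
            rw [← hv k, hs k]
        · exact absurd hv (hbad i v hg)
    · intro i j hij
      rw [Set.eq_empty_iff_forall_notMem]
      rintro v ⟨hvi, hvj⟩
      by_cases hgi : good (idx i)
      · by_cases hgj : good (idx j)
        · have hne : idx i ≠ idx j := fun h => hij (idx.injective h)
          obtain ⟨k, hk⟩ := Function.ne_iff.1 hne
          rw [hgoodmem i v hgi] at hvi
          rw [hgoodmem j v hgj] at hvj
          refine hk ?_
          have h1 := hvi k
          have h2 := hvj k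
          by_cases hs : (L.get k).Sat cI uI fI v
          · rw [h1.2 hs, h2.2 hs]
          · cases hci : idx i k <;> cases hcj : idx j k <;>
              simp_all
        · exact hbad j v hgj hvj
      · exact hbad i v hgi hvi

end PaperQE

open PaperQE in
/-- Disjoint normal form for first-order definable relations
on bijective structures. For every first-order σ-formula `φ(x₁,…,x_p)` over a
unary functional signature σ there are finitely many formulas `Ψ_1,…,Ψ_r`,
each a conjunction of bijective literals, such that for every bijective
σ-structure `S` with domain `D` one has
`φ(S) = Ψ_1(S) ∪ ⋯ ∪ Ψ_r(S)` with `Ψ_i(S) ∩ Ψ_j(S) = ∅` for `i ≠ j`,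
where `φ(S) = {ā ∈ D^p : S ⊨ φ(ā)}`. -/
theorem disjoint_normal_form_FOBij
    {C U F : Type} [Fintype C] [Fintype U] [Fintype F] {p : ℕ}
    (φ : BForm C U F p) :
    ∃ (r : ℕ) (Ψ : Fin r → List (BAtom C U F p × Bool)),
      ∀ (D : Type*) (cI : C → D) (uI : U → D → Prop) (fI : F → Equiv.Perm D),
        ({v : Fin p → D | φ.Sat cI uI fI v} = ⋃ i, ConjSet cI uI fI (Ψ i)) ∧
        ∀ i j : Fin r, i ≠ j →
          ConjSet cI uI fI (Ψ i) ∩ ConjSet cI uI fI (Ψ j) = ∅ := by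
  obtain ⟨β, hβ⟩ := PaperQE.qe φ
  obtain ⟨r, Ψ, hΨ⟩ := PaperQE.exists_disjoint_patterns β
  refine ⟨r, Ψ, fun D cI uI fI => ⟨?_, (hΨ D cI uI fI).2⟩⟩
  rw [← (hΨ D cI uI fI).1]
  ext v
  simp only [Set.mem_setOf_eq]
  exact hβ D cI uI fI v
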